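/- Define u : (0, ∞) → ℝ² by u(t) = ((2π²)^{−1/3}·t^{2/3}, (2π²)^{−1/3}·t^{−1/3}), and let G₂(x,y) = (−(1/4)·x³/y⁴ + (1/12)·x/y² + (1/6)·(1/x), (1/8)·x²/y³ − (1/12)·y/x² − (1/24)·(1/y)). Then for every t > 0 one has G₂(u(t)) = k₂(t)·u'(t), where k₂(t) = (1/8)·(2π²)^{2/3}·t^{−1/3}·(−3t⁴ + t² + 2). In particular, the vector field G₂ is tangent to the image of u (the curve of volume-normalized Berger metrics). -/

import Mathlib

open Real Filter Set Topology
open scoped ENNReal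

/-- The vector field of the volume-normalized spinor-flow system on Berger spheres
in the case `aμ = -1`. -/
noncomputable def G2 (x y : ℝ) : ℝ × ℝ :=
  (-(1/4) * x^3 / y^4 + (1/12) * x / y^2 + (1/6) * (1/x),
   (1/8) * x^2 / y^3 - (1/12) * y / x^2 - (1/24) * (1/y))
/-- First component of the curve of volume-one Berger metrics:
`u₁(t) = (2π²)^(-1/3) t^(2/3)`. -/
noncomputable def u1 (t : ℝ) : ℝ := (2 * π^2) ^ (-(1:ℝ)/3) * t ^ ((2:ℝ)/3)

/-- Second component: `u₂(t) = (2π²)^(-1/3) t^(-1/3)`. -/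
noncomputable def u2 (t : ℝ) : ℝ := (2 * π^2) ^ (-(1:ℝ)/3) * t ^ (-(1:ℝ)/3)

/-- The reparametrization factor `k₂(t) = (1/8)(2π²)^(2/3) t^(-1/3)(-3t⁴ + t² + 2)`. -/
noncomputable def k2 (t : ℝ) : ℝ :=
  (1/8) * (2 * π^2) ^ ((2:ℝ)/3) * t ^ (-(1:ℝ)/3) * (-3*t^4 + t^2 + 2)

/-!
`G₂` is homogeneous of degree `-1`. Writing `t = s³` and `2π² = q³`, the curve is
`u = q⁻¹ (s², s⁻¹)`, so `G₂(u) = q G₂(s², s⁻¹)` and the tangency becomes a rational identity in `s`.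
-/

theorem hasDerivAt_const_mul_rpow {t : ℝ} (c p : ℝ) (ht : t ≠ 0) :
    HasDerivAt (fun x ↦ c * x ^ p) (c * p * t ^ (p - 1)) t := by
  simpa only [mul_assoc] using (hasDerivAt_rpow_const (Or.inl ht)).const_mul c

theorem G2_const_mul {c : ℝ} (hc : c ≠ 0) (x y : ℝ) : G2 (c * x) (c * y) = c⁻¹ • G2 x y := by
  simp only [G2, Prod.smul_mk, smul_eq_mul, Prod.mk.injEq]
  constructor <;> field_simp

theorem G2_sq_inv {s : ℝ} (hs : s ≠ 0) :
    G2 (s ^ 2) s⁻¹ = (-3 * s ^ 12 + s ^ 6 + 2) • ((12 * s ^ 2)⁻¹, -(24 * s ^ 5)⁻¹) := by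
  simp only [G2, Prod.smul_mk, smul_eq_mul, Prod.mk.injEq]
  constructor <;> field_simp <;> ring

/-- For every `t > 0`, `G₂(u(t)) = k₂(t) · u'(t)`: the vector field `G₂` is tangent to
the curve of volume-normalized Berger metrics. -/
theorem G2_tangent_to_u (t : ℝ) (ht : 0 < t) :
    HasDerivAt u1 ((2 * π^2) ^ (-(1:ℝ)/3) * ((2:ℝ)/3) * t ^ (-(1:ℝ)/3)) t ∧
    HasDerivAt u2 ((2 * π^2) ^ (-(1:ℝ)/3) * (-(1:ℝ)/3) * t ^ (-(4:ℝ)/3)) t ∧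
    G2 (u1 t) (u2 t) =
      (k2 t * ((2 * π^2) ^ (-(1:ℝ)/3) * ((2:ℝ)/3) * t ^ (-(1:ℝ)/3)),
       k2 t * ((2 * π^2) ^ (-(1:ℝ)/3) * (-(1:ℝ)/3) * t ^ (-(4:ℝ)/3))) := by
  refine ⟨?_, ?_, ?_⟩
  · exact (hasDerivAt_const_mul_rpow _ ((2:ℝ)/3) ht.ne').congr_deriv (by norm_num)
  · exact (hasDerivAt_const_mul_rpow _ (-(1:ℝ)/3) ht.ne').congr_deriv (by norm_num)
  obtain ⟨s, hs, rfl⟩ : ∃ s > 0, s ^ 3 = t :=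
    ⟨t ^ (3⁻¹ : ℝ), by positivity, rpow_inv_natCast_pow ht.le three_ne_zero⟩
  obtain ⟨q, hq, hq3⟩ : ∃ q > 0, q ^ 3 = 2 * π ^ 2 :=
    ⟨(2 * π ^ 2) ^ (3⁻¹ : ℝ), by positivity, rpow_inv_natCast_pow (by positivity) three_ne_zero⟩
  simp only [u1, u2, k2]
  rw [← hq3]
  simp only [← rpow_natCast_mul hs.le, ← rpow_natCast_mul hq.le]
  norm_num [rpow_neg hs.le, rpow_neg hq.le]
  rw [G2_const_mul (inv_ne_zero hq.ne'), G2_sq_inv hs.ne']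
  simp only [Prod.smul_mk, smul_eq_mul, Prod.mk.injEq]
  constructor <;> field_simp <;> ring
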